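/- arXiv:1203.5685 — 3 statements merged into one kernel-verified Lean document; each statement's English description precedes it below -/
import Mathlib

section
/- Let V_c be the codimension-c star configuration determined by s hyperplanes in P^n meeting properly. Then the initial degree of I_{V_c} is α(I_{V_c}) = s−c+1, and I_{V_c} is generated by homogeneous elements of degree s−c+1 that are monomials in the linear forms L_i; precisely, I_{V_c} is generated by the products ∏_{i∈T} L_i taken over all subsets T ⊆ {1,…,s} with |T| = s−c+1. -/
open MvPolynomial

noncomputable section

def starIdeal {k : Type*} [Field k] {n s : ℕ} (L : Fin s → MvPolynomial (Fin (n + 1)) k)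
    (c : ℕ) : Ideal (MvPolynomial (Fin (n + 1)) k) :=
  ⨅ (T : Finset (Fin s)) (_ : T.card = c), Ideal.span (L '' ↑T)

def MeetProperly {k : Type*} [Field k] {n s : ℕ} (L : Fin s → MvPolynomial (Fin (n + 1)) k) : Prop :=
  (∀ i, (L i).IsHomogeneous 1) ∧
    ∀ T : Finset (Fin s), T.card ≤ min s (n + 1) →
      LinearIndependent k (fun i : T => L i)

/-- The initial degree of an ideal: the least degree of a nonzero homogeneous element. -/
def initialDegree {k : Type*} [Field k] {n : ℕ}
    (J : Ideal (MvPolynomial (Fin (n + 1)) k)) : ℕ :=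
  sInf {d : ℕ | ∃ f ∈ J, f ≠ 0 ∧ f.IsHomogeneous d}

/-!
Any `c + 1` of the linear forms `L i` form a weakly regular sequence, by induction on their
number: the linear substitution killing one form `g` is the identity modulo `g`, so the ideal of
`g` and further forms is the preimage of the ideal of their images, and independent forms stay
independent after the substitution.

Granting this regularity, the equality `⋂_{|T| = c} (L_T) = (∏_{i ∈ U} L i : |U| = s - c + 1)`
holds in any commutative ring, by induction on `s`. For `f` in the intersection, its image modulo
`L 0` lies in the codimension `c - 1` star ideal of the other forms, so by induction
`f = q + a * L 0` with `q` a combination of products of `s - c + 1` of the other forms. Then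
`a * L 0` lies in every `(L_T)` with `0 ∉ T`, so regularity puts `a` in the codimension `c` star
ideal of the other forms, and induction again writes `a * L 0` through the required products.
The generators are nonzero forms of degree `s - c + 1`, which gives the initial degree.
-/

section StarConfiguration

variable {R : Type*} [CommRing R] {s c : ℕ}

def starConfigIdeal (L : Fin s → R) (c : ℕ) : Ideal R :=
  ⨅ (T : Finset (Fin s)) (_ : T.card = c), Ideal.span (L '' ↑T)

def starMonomialIdeal (L : Fin s → R) (c : ℕ) : Ideal R :=
  Ideal.span {f | ∃ T : Finset (Fin s), T.card = s - c + 1 ∧ f = ∏ i ∈ T, L i}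

/-- Every `c + 1` of the `L i`, taken in any order, form a weakly regular sequence. -/
def IsStarRegular {ι : Type*} (L : ι → R) (c : ℕ) : Prop :=
  ∀ T : Finset ι, T.card ≤ c → ∀ i ∉ T, ∀ h : R,
    h * L i ∈ Ideal.span (L '' ↑T) → h ∈ Ideal.span (L '' ↑T)

theorem mem_starConfigIdeal {L : Fin s → R} {f : R} :
    f ∈ starConfigIdeal L c ↔
      ∀ T : Finset (Fin s), T.card = c → f ∈ Ideal.span (L '' ↑T) := by
  simp [starConfigIdeal]

theorem starMonomialIdeal_le_starConfigIdeal (L : Fin s → R) (hc : c ≤ s) :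
    starMonomialIdeal L c ≤ starConfigIdeal L c := by
  rw [starMonomialIdeal, Ideal.span_le]
  rintro _ ⟨U, hU, rfl⟩
  refine mem_starConfigIdeal.2 fun T hT => ?_
  obtain ⟨i, hi⟩ : (T ∩ U).Nonempty :=
    Finset.inter_nonempty_of_card_lt_card_add_card (Finset.subset_univ _)
      (Finset.subset_univ _) (by simp only [Finset.card_univ, Fintype.card_fin]; omega)
  obtain ⟨hiT, hiU⟩ := Finset.mem_inter.1 hi
  rw [← Finset.mul_prod_erase U L hiU]
  exact Ideal.mul_mem_right _ _ (Ideal.subset_span ⟨i, hiT, rfl⟩)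

theorem starConfigIdeal_zero (L : Fin s → R) : starConfigIdeal L 0 = ⊥ :=
  eq_bot_iff.2 <| (iInf₂_le ∅ Finset.card_empty).trans <| by simp

theorem starConfigIdeal_self_le (L : Fin s → R) :
    starConfigIdeal L s ≤ starMonomialIdeal L s := by
  refine (iInf₂_le Finset.univ (by simp)).trans (Ideal.span_le.2 ?_)
  rintro _ ⟨i, -, rfl⟩
  exact Ideal.subset_span ⟨{i}, by simp, by simp⟩

theorem starMonomialIdeal_map {S : Type*} [CommRing S] (φ : R →+* S) (L : Fin s → R) :
    starMonomialIdeal (φ ∘ L) c = (starMonomialIdeal L c).map φ := by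
  rw [starMonomialIdeal, starMonomialIdeal, Ideal.map_span]
  congr 1
  ext f
  simp [map_prod, eq_comm]

theorem starMonomialIdeal_comp_succ_le (L : Fin (s + 1) → R) :
    starMonomialIdeal (L ∘ Fin.succ) c ≤ starMonomialIdeal L (c + 1) := by
  refine Ideal.span_le.2 ?_
  rintro _ ⟨T, hT, rfl⟩
  exact Ideal.subset_span ⟨T.map (Fin.succEmb s), by simp [hT], by simp [Finset.prod_map]⟩

theorem mul_mem_starMonomialIdeal {L : Fin (s + 1) → R} (hc : c ≤ s) {a : R}
    (ha : a ∈ starMonomialIdeal (L ∘ Fin.succ) c) : a * L 0 ∈ starMonomialIdeal L c := by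
  suffices starMonomialIdeal (L ∘ Fin.succ) c ≤ (starMonomialIdeal L c).colon {L 0} from
    Submodule.mem_colon_singleton.1 (this ha)
  refine Ideal.span_le.2 ?_
  rintro _ ⟨T, hT, rfl⟩
  refine Submodule.mem_colon_singleton.2 (Ideal.subset_span ⟨Finset.cons 0
    (T.map (Fin.succEmb s)) (by simp [Fin.succ_ne_zero]), by simp [hT]; omega, ?_⟩)
  simp [Finset.prod_map, mul_comm]

theorem Ideal.mk_mem_span_image_iff {g x : R} {S : Set R} :
    Ideal.Quotient.mk (Ideal.span {g}) x ∈ Ideal.span (Ideal.Quotient.mk _ '' S) ↔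
      x ∈ Ideal.span (insert g S) := by
  rw [← Ideal.map_span, Ideal.mem_quotient_iff_mem_sup, Ideal.span_insert, sup_comm]

theorem IsStarRegular.mem_starConfigIdeal_comp_succ {L : Fin (s + 1) → R}
    (hL : IsStarRegular L c) {a : R} (ha : a * L 0 ∈ starConfigIdeal L c) :
    a ∈ starConfigIdeal (L ∘ Fin.succ) c :=
  mem_starConfigIdeal.2 fun T hT => by
    have := hL (T.map (Fin.succEmb s)) (by simp [hT]) 0 (by simp [Fin.succ_ne_zero]) a
      (mem_starConfigIdeal.1 ha _ (by simp [hT]))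
    simpa [Set.image_image] using this

theorem IsStarRegular.comp {ι κ : Type*} {L : ι → R} (hL : IsStarRegular L c) (e : κ ↪ ι) :
    IsStarRegular (L ∘ e) c := fun T hT i hi h hh => by
  have := hL (T.map e) (by simpa using hT) (e i) (by simpa using hi) h
  simpa [Set.image_image] using this (by simpa [Set.image_image] using hh)

theorem IsStarRegular.quotient {L : Fin (s + 1) → R} (hL : IsStarRegular L (c + 1)) :
    IsStarRegular (Ideal.Quotient.mk (Ideal.span {L 0}) ∘ L ∘ Fin.succ) c := by
  intro T hT i hi h hh
  obtain ⟨h, rfl⟩ := Ideal.Quotient.mk_surjective h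
  have himage : L '' ↑(Finset.cons 0 (T.map (Fin.succEmb s)) (by simp [Fin.succ_ne_zero])) =
      insert (L 0) ((L ∘ Fin.succ) '' ↑T) := by
    simp [Set.image_insert_eq, Set.image_image]
  rw [Set.image_comp] at hh ⊢
  rw [Function.comp_apply, ← map_mul, Ideal.mk_mem_span_image_iff] at hh
  rw [Ideal.mk_mem_span_image_iff, ← himage]
  exact hL _ (by simpa using hT) i.succ (by simpa [Fin.succ_ne_zero] using hi) h (himage ▸ hh)

theorem starConfigIdeal_le_starMonomialIdeal_succ {L : Fin (s + 1) → R} (hc : c + 1 ≤ s)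
    (hL : IsStarRegular L (c + 1))
    (ih_tail :
      starConfigIdeal (L ∘ Fin.succ) (c + 1) ≤ starMonomialIdeal (L ∘ Fin.succ) (c + 1))
    (ih_quot : starConfigIdeal (Ideal.Quotient.mk (Ideal.span {L 0}) ∘ L ∘ Fin.succ) c ≤
      starMonomialIdeal (Ideal.Quotient.mk (Ideal.span {L 0}) ∘ L ∘ Fin.succ) c) :
    starConfigIdeal L (c + 1) ≤ starMonomialIdeal L (c + 1) := by
  intro f hf
  have hf_quot : Ideal.Quotient.mk (Ideal.span {L 0}) f ∈
      starConfigIdeal (Ideal.Quotient.mk (Ideal.span {L 0}) ∘ L ∘ Fin.succ) c := by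
    refine mem_starConfigIdeal.2 fun T hT => ?_
    rw [Set.image_comp, Ideal.mk_mem_span_image_iff]
    have := mem_starConfigIdeal.1 hf (Finset.cons 0 (T.map (Fin.succEmb s))
      (by simp [Fin.succ_ne_zero])) (by simp [hT])
    simpa [Set.image_insert_eq, Set.image_image] using this
  have hf_sup : f ∈ starMonomialIdeal (L ∘ Fin.succ) c ⊔ Ideal.span {L 0} := by
    rw [← Ideal.mem_quotient_iff_mem_sup, ← starMonomialIdeal_map]
    exact ih_quot hf_quot
  obtain ⟨q, hq, _, hr, rfl⟩ := Submodule.mem_sup.1 hf_sup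
  obtain ⟨a, rfl⟩ := Ideal.mem_span_singleton'.1 hr
  have hq' : q ∈ starMonomialIdeal L (c + 1) := starMonomialIdeal_comp_succ_le L hq
  have ha : a ∈ starConfigIdeal (L ∘ Fin.succ) (c + 1) := by
    refine hL.mem_starConfigIdeal_comp_succ ?_
    simpa using sub_mem hf (starMonomialIdeal_le_starConfigIdeal L (by omega) hq')
  exact add_mem hq' (mul_mem_starMonomialIdeal hc (ih_tail ha))

theorem starConfigIdeal_le_starMonomialIdeal (L : Fin s → R) (hL : IsStarRegular L c)
    (hc : c ≤ s) : starConfigIdeal L c ≤ starMonomialIdeal L c := by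
  induction s generalizing R c with
  | zero => simp [Nat.le_zero.1 hc, starConfigIdeal_zero]
  | succ s ih =>
    rcases c with _ | c
    · simp [starConfigIdeal_zero]
    rcases hc.eq_or_lt with hcs | hc
    · cases hcs
      exact starConfigIdeal_self_le L
    exact starConfigIdeal_le_starMonomialIdeal_succ (by omega) hL
      (ih _ (hL.comp (Fin.succEmb s)) (by omega)) (ih _ hL.quotient (by omega))

theorem starConfigIdeal_eq_starMonomialIdeal (L : Fin s → R) (hL : IsStarRegular L c)
    (hc : c ≤ s) : starConfigIdeal L c = starMonomialIdeal L c :=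
  (starConfigIdeal_le_starMonomialIdeal L hL hc).antisymm
    (starMonomialIdeal_le_starConfigIdeal L hc)

end StarConfiguration

namespace MvPolynomial

section LinearForms

variable {k σ : Type*} [Field k]

theorem IsHomogeneous.exists_coeff_single_ne_zero {g : MvPolynomial σ k}
    (hg : g.IsHomogeneous 1) (hg0 : g ≠ 0) : ∃ j, coeff (Finsupp.single j 1) g ≠ 0 := by
  obtain ⟨m, hm⟩ := ne_zero_iff.1 hg0
  have hdeg : m ∈ {d : σ →₀ ℕ | d.degree = 1} := by_contra fun h => hm (hg.coeff_eq_zero h)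
  rw [← Finsupp.range_single_one] at hdeg
  obtain ⟨j, rfl⟩ := hdeg
  exact ⟨j, hm⟩

section Substitution

variable [DecidableEq σ]

def killLinearForm (g : MvPolynomial σ k) (j₀ : σ) :
    MvPolynomial σ k →ₐ[k] MvPolynomial σ k :=
  aeval (Function.update X j₀ (X j₀ - C (coeff (Finsupp.single j₀ 1) g)⁻¹ * g))

variable {g : MvPolynomial σ k} {j₀ : σ}

theorem killLinearForm_of_isHomogeneous_one {v : MvPolynomial σ k} (hv : v.IsHomogeneous 1) :
    killLinearForm g j₀ v =
      v - C ((coeff (Finsupp.single j₀ 1) g)⁻¹ * coeff (Finsupp.single j₀ 1) v) * g := by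
  have hv' : v ∈ Submodule.span k (Set.range X) := by
    rw [← homogeneousSubmodule_one_eq_span_X]; exact hv
  clear hv
  induction hv' using Submodule.span_induction with
  | mem _ h =>
    obtain ⟨j, rfl⟩ := h
    rcases eq_or_ne j j₀ with rfl | hj
    · simp [killLinearForm]
    · simp [killLinearForm, hj, coeff_X, Finsupp.single_left_inj]
  | zero => simp
  | add x y _ _ hx hy => simp only [map_add, hx, hy, coeff_add, mul_add]; ring
  | smul a x _ hx =>
    rw [map_smul, hx, coeff_smul, smul_eq_C_mul, smul_eq_C_mul, smul_eq_mul]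
    simp only [C_mul]; ring

theorem IsHomogeneous.killLinearForm {v : MvPolynomial σ k} (hv : v.IsHomogeneous 1)
    (hg : g.IsHomogeneous 1) : (killLinearForm g j₀ v).IsHomogeneous 1 := by
  rw [killLinearForm_of_isHomogeneous_one hv]
  exact hv.sub (hg.C_mul _)

theorem killLinearForm_self (hg : g.IsHomogeneous 1)
    (hj₀ : coeff (Finsupp.single j₀ 1) g ≠ 0) : killLinearForm g j₀ g = 0 := by
  rw [killLinearForm_of_isHomogeneous_one hg, inv_mul_cancel₀ hj₀, C_1, one_mul, sub_self]

theorem sub_killLinearForm_mem_span (f : MvPolynomial σ k) :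
    f - killLinearForm g j₀ f ∈ Ideal.span {g} := by
  have hcomp : (Ideal.Quotient.mkₐ k (Ideal.span {g})).comp (killLinearForm g j₀) =
      Ideal.Quotient.mkₐ k _ := by
    refine algHom_ext fun j => ?_
    rcases eq_or_ne j j₀ with rfl | hj <;> simp [killLinearForm, *]
  exact Ideal.Quotient.eq.1 (by simpa using (DFunLike.congr_fun hcomp f).symm)

theorem span_insert_eq_comap_killLinearForm (hg : killLinearForm g j₀ g = 0)
    (S : Set (MvPolynomial σ k)) :
    Ideal.span (insert g S) =
      (Ideal.span (killLinearForm g j₀ '' S)).comap (killLinearForm g j₀) := by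
  have hsub : ∀ f, f - killLinearForm g j₀ f ∈ Ideal.span (insert g S) := fun f =>
    Ideal.span_mono (Set.singleton_subset_iff.2 (Set.mem_insert g S))
      (sub_killLinearForm_mem_span f)
  refine le_antisymm (Ideal.span_le.2 ?_) fun f hf => ?_
  · rintro _ (rfl | hf)
    · simp [hg]
    · exact Ideal.subset_span (Set.mem_image_of_mem _ hf)
  · have hle : Ideal.span (killLinearForm g j₀ '' S) ≤ Ideal.span (insert g S) := by
      refine Ideal.span_le.2 ?_
      rintro _ ⟨p, hp, rfl⟩
      simpa using sub_mem (Ideal.subset_span (Set.mem_insert_of_mem g hp)) (hsub p)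
    simpa using add_mem (hsub f) (hle hf)

theorem linearIndepOn_comp_killLinearForm {ι : Type*} {L : ι → MvPolynomial σ k} {T : Set ι}
    {t : ι} (hL : ∀ i, (L i).IsHomogeneous 1) (ht : t ∉ T)
    (hind : LinearIndepOn k L (insert t T)) :
    LinearIndepOn k (killLinearForm (L t) j₀ ∘ L) T := by
  refine (hind.mono (Set.subset_insert t T)).map_injOn (killLinearForm (L t) j₀).toLinearMap
    (LinearMap.injOn_of_disjoint_ker le_rfl (Submodule.disjoint_def.2 fun v hv hker => ?_))
  have hv1 : v.IsHomogeneous 1 := by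
    refine (Submodule.span_le (p := homogeneousSubmodule σ k 1)).2 ?_ hv
    rintro _ ⟨i, -, rfl⟩
    exact hL i
  set μ := (coeff (Finsupp.single j₀ 1) (L t))⁻¹ * coeff (Finsupp.single j₀ 1) v
  have hv_eq : v = μ • L t := by
    rw [LinearMap.mem_ker, AlgHom.toLinearMap_apply,
      killLinearForm_of_isHomogeneous_one hv1, sub_eq_zero] at hker
    rw [hker, smul_eq_C_mul]
  rcases eq_or_ne μ 0 with hμ | hμ
  · rw [hv_eq, hμ, zero_smul]
  · refine absurd ?_ (hind.notMem_span_of_insert ht)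
    simpa [hv_eq, hμ] using Submodule.smul_mem _ μ⁻¹ hv

end Substitution

theorem mem_span_of_mul_mem_span {ι : Type*} {L : ι → MvPolynomial σ k}
    (hL : ∀ i, (L i).IsHomogeneous 1) {T : Finset ι} {i : ι} (hi : i ∉ T)
    (hind : LinearIndepOn k L (insert i ↑T)) {h : MvPolynomial σ k}
    (hh : h * L i ∈ Ideal.span (L '' ↑T)) : h ∈ Ideal.span (L '' ↑T) := by
  classical
  induction T using Finset.induction_on generalizing L i h with
  | empty =>
    simp only [Finset.coe_empty, Set.image_empty, Ideal.span_empty, Ideal.mem_bot,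
      mul_eq_zero] at hh ⊢
    exact hh.resolve_right (hind.ne_zero (Set.mem_insert i _))
  | insert t T ht ih =>
    obtain ⟨hit, hiT⟩ : i ≠ t ∧ i ∉ T := by simpa using hi
    obtain ⟨j₀, hj₀⟩ := (hL t).exists_coeff_single_ne_zero (hind.ne_zero (by simp))
    set π := killLinearForm (L t) j₀
    have hspan :
        Ideal.span (L '' ↑(insert t T)) = (Ideal.span ((π ∘ L) '' ↑T)).comap π := by
      rw [Finset.coe_insert, Set.image_insert_eq, Set.image_comp,
        span_insert_eq_comap_killLinearForm (killLinearForm_self (hL t) hj₀)]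
    have hind' : LinearIndepOn k (π ∘ L) (insert i ↑T) := by
      refine linearIndepOn_comp_killLinearForm hL (by simpa [hit.symm] using ht) ?_
      simpa [Set.insert_comm] using hind
    rw [hspan, Ideal.mem_comap, map_mul] at hh
    rw [hspan, Ideal.mem_comap]
    exact ih (fun j => (hL j).killLinearForm (hL t)) (by simpa using hiT) hind' hh

theorem isStarRegular_of_linearIndepOn {ι : Type*} {L : ι → MvPolynomial σ k} {c : ℕ}
    (hL : ∀ i, (L i).IsHomogeneous 1)
    (hind : ∀ T : Finset ι, T.card ≤ c + 1 → LinearIndepOn k L ↑T) :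
    IsStarRegular L c := by
  classical
  intro T hT i hi h hh
  refine mem_span_of_mul_mem_span hL hi ?_ hh
  simpa using hind (insert i T) ((Finset.card_insert_le i T).trans (by omega))

end LinearForms

theorem IsHomogeneous.mem_pow_idealOfVars {R σ : Type*} [CommSemiring R]
    {p : MvPolynomial σ R} {d : ℕ} (hp : p.IsHomogeneous d) : p ∈ idealOfVars σ R ^ d :=
  (mem_pow_idealOfVars_iff' d p).2 fun _ hm => hp.coeff_eq_zero hm.ne

theorem le_of_mem_pow_idealOfVars {R σ : Type*} [CommSemiring R] {f : MvPolynomial σ R}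
    {d e : ℕ} (hf : f ∈ idealOfVars σ R ^ d) (hf0 : f ≠ 0) (hfe : f.IsHomogeneous e) :
    d ≤ e := by
  by_contra! hed
  obtain ⟨m, hm⟩ := ne_zero_iff.1 hf0
  have hdeg : m.degree = e := by_contra fun h => hm (hfe.coeff_eq_zero h)
  exact hm ((mem_pow_idealOfVars_iff' d f).1 hf m (hdeg ▸ hed))

end MvPolynomial

theorem initialDegree_span {k : Type*} [Field k] {n d : ℕ}
    {S : Set (MvPolynomial (Fin (n + 1)) k)} (hS : ∀ p ∈ S, p.IsHomogeneous d)
    {p : MvPolynomial (Fin (n + 1)) k} (hp : p ∈ S) (hp0 : p ≠ 0) :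
    initialDegree (Ideal.span S) = d := by
  have hle : Ideal.span S ≤ idealOfVars _ k ^ d :=
    Ideal.span_le.2 fun q hq => (hS q hq).mem_pow_idealOfVars
  have hd : d ∈ {d : ℕ | ∃ f ∈ Ideal.span S, f ≠ 0 ∧ f.IsHomogeneous d} :=
    ⟨p, Ideal.subset_span hp, hp0, hS p hp⟩
  refine le_antisymm (Nat.sInf_le hd) (le_csInf ⟨d, hd⟩ ?_)
  rintro e ⟨f, hf, hf0, hfe⟩
  exact le_of_mem_pow_idealOfVars (hle hf) hf0 hfe

theorem star_configuration_generators_general {k : Type*} [Field k] {n s c : ℕ}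
    (L : Fin s → MvPolynomial (Fin (n + 1)) k) (hL : MeetProperly L)
    (hc1 : 1 ≤ c) (hc2 : c ≤ min s n) :
    initialDegree (starIdeal L c) = s - c + 1 ∧
    starIdeal L c =
      Ideal.span {f | ∃ T : Finset (Fin s), T.card = s - c + 1 ∧ f = ∏ i ∈ T, L i} := by
  obtain ⟨hlin, hind⟩ := hL
  have hcs : c ≤ s := hc2.trans (min_le_left _ _)
  have hind' : ∀ T : Finset (Fin s), T.card ≤ c + 1 → LinearIndepOn k L ↑T := fun T hT =>
    hind T (le_min (T.card_le_univ.trans_eq (Fintype.card_fin s)) (by omega))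
  have hreg : IsStarRegular L c := isStarRegular_of_linearIndepOn hlin hind'
  have heq : starIdeal L c = starMonomialIdeal L c :=
    starConfigIdeal_eq_starMonomialIdeal L hreg hcs
  refine ⟨?_, heq⟩
  obtain ⟨T, -, hT⟩ := Finset.exists_subset_card_eq (s := (Finset.univ : Finset (Fin s)))
    (n := s - c + 1) (by simp; omega)
  have hLi : ∀ i, L i ≠ 0 := fun i =>
    (hind' {i} (by simp)).ne_zero (Finset.mem_singleton_self i)
  rw [heq]
  refine initialDegree_span ?_ ⟨T, hT, rfl⟩ (Finset.prod_ne_zero_iff.2 fun i _ => hLi i)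
  rintro _ ⟨U, hU, rfl⟩
  simpa [hU] using IsHomogeneous.prod U L (fun _ => 1) fun i _ => hlin i

theorem star_configuration_generators {k : Type*} [Field k] [Infinite k] {n s c : ℕ}
    (L : Fin s → MvPolynomial (Fin (n + 1)) k) (hL : MeetProperly L)
    (hs : 1 ≤ s) (hc1 : 1 ≤ c) (hc2 : c ≤ min s n) :
    initialDegree (starIdeal L c) = s - c + 1 ∧
    starIdeal L c =
      Ideal.span {f | ∃ T : Finset (Fin s), T.card = s - c + 1 ∧ f = ∏ i ∈ T, L i} :=
  star_configuration_generators_general L hL hc1 hc2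
end
end

section
/- Let V_{c−1} and V_c be the codimension-(c−1) and codimension-c star configurations determined by the same s hyperplanes in P^n meeting properly, where 2 ≤ c ≤ min(s, n). Then I_{V_{c−1}} ⊆ I_{V_c}^{(2)}, i.e., the ideal of V_{c−1} is contained in the symbolic square of the ideal of V_c. -/
open MvPolynomial

noncomputable section

def starSymbolic {k : Type*} [Field k] {n s : ℕ} (L : Fin s → MvPolynomial (Fin (n + 1)) k)
    (c ℓ : ℕ) : Ideal (MvPolynomial (Fin (n + 1)) k) :=
  ⨅ (T : Finset (Fin s)) (_ : T.card = c), (Ideal.span (L '' ↑T)) ^ ℓ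

/-!
After a linear change of coordinates, `c` linearly independent linear forms become variables
`X i`. If a polynomial lies in every ideal `(X j : j ≠ i)`, each of its monomials is divisible
by some variable `X i` of the family and then, using the ideal that omits `X i`, by a second one
`X j`; so the monomial lies in `(X i : i)^2`. For the star configuration, fix a `c`-subset `T` of
the hyperplanes: its `(c - 1)`-subsets `T \ {i}` are among those defining `I_{V_{c-1}}`.
-/

namespace MvPolynomial

section Monomial

variable {σ R : Type*} [CommSemiring R]

theorem monomial_eq_X_mul_monomial_tsub {d : σ →₀ ℕ} {i : σ} (hd : d i ≠ 0) (a : R) :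
    monomial d a = X i * monomial (d - Finsupp.single i 1) a := by
  rw [← pow_one (X i), ← monomial_single_add,
    add_tsub_cancel_of_le (Finsupp.single_le_iff.2 (Nat.one_le_iff_ne_zero.2 hd))]

theorem mem_span_X_image_sq_of_forall_mem_span_X_image_diff {S : Set σ} (hS : S.Nonempty)
    {g : MvPolynomial σ R} (hg : ∀ i ∈ S, g ∈ Ideal.span (X '' (S \ {i}))) :
    g ∈ Ideal.span (X '' S) ^ 2 := by
  obtain ⟨i₀, hi₀⟩ := hS
  rw [← support_sum_monomial_coeff g]
  refine Ideal.sum_mem _ fun d hd => ?_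
  obtain ⟨i, ⟨hiS, -⟩, hdi⟩ := mem_ideal_span_X_image.1 (hg i₀ hi₀) d hd
  obtain ⟨j, ⟨hjS, hji⟩, hdj⟩ := mem_ideal_span_X_image.1 (hg i hiS) d hd
  have hdj' : (d - Finsupp.single i 1 : σ →₀ ℕ) j ≠ 0 := by
    simpa [Finsupp.single_eq_of_ne hji] using hdj
  rw [monomial_eq_X_mul_monomial_tsub hdi, monomial_eq_X_mul_monomial_tsub hdj', ← mul_assoc, sq]
  exact Ideal.mul_mem_right _ _
    (Ideal.mul_mem_mul (Ideal.subset_span ⟨i, hiS, rfl⟩) (Ideal.subset_span ⟨j, hjS, rfl⟩))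

end Monomial

section ChangeOfBasis

variable {σ κ R : Type*} [CommRing R]

/-- Both rings are the symmetric algebra of `σ →₀ R`, presented via the standard basis and via `b`;
a linear form `linearCombination R X v` corresponds to the vector `v`. -/
def changeOfBasis (b : Module.Basis κ R (σ →₀ R)) :
    MvPolynomial σ R ≃ₐ[R] MvPolynomial κ R :=
  (SymmetricAlgebra.equivMvPolynomial Finsupp.basisSingleOne).symm.trans
    (SymmetricAlgebra.equivMvPolynomial b)

theorem changeOfBasis_linearCombination_X (b : Module.Basis κ R (σ →₀ R)) (i : κ) :
    changeOfBasis b (Finsupp.linearCombination R X (b i)) = X i := by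
  have h : (SymmetricAlgebra.equivMvPolynomial Finsupp.basisSingleOne).symm.toLinearMap ∘ₗ
      Finsupp.linearCombination R X = SymmetricAlgebra.ι R (σ →₀ R) :=
    Finsupp.basisSingleOne.ext fun j => by
      simp [SymmetricAlgebra.equivMvPolynomial_symm_X]
  exact (congrArg (SymmetricAlgebra.equivMvPolynomial b) (LinearMap.congr_fun h (b i))).trans
    (SymmetricAlgebra.equivMvPolynomial_ι_apply b i)

end ChangeOfBasis

section LinearForms

variable {ι σ k : Type*} [Field k]

theorem mem_span_range_sq_of_forall_mem_span_image_compl [Nonempty ι]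
    {G : ι → MvPolynomial σ k} (hG : ∀ i, (G i).IsHomogeneous 1) (hind : LinearIndependent k G)
    {f : MvPolynomial σ k} (hf : ∀ i, f ∈ Ideal.span (G '' {i}ᶜ)) :
    f ∈ Ideal.span (Set.range G) ^ 2 := by
  have hlin (i : ι) : G i ∈ LinearMap.range (Finsupp.linearCombination k X) := by
    rw [Finsupp.range_linearCombination, ← homogeneousSubmodule_one_eq_span_X]
    exact hG i
  choose v hv using hlin
  have hvG : Finsupp.linearCombination k X ∘ v = G := _root_.funext hv
  have hvind : LinearIndependent k v := .of_comp _ (hvG ▸ hind)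
  let b := Module.Basis.extend hvind.linearIndepOn_id
  let e (i : ι) : hvind.linearIndepOn_id.extend (Set.subset_univ _) :=
    ⟨v i, hvind.linearIndepOn_id.subset_extend _ ⟨i, rfl⟩⟩
  have he : Function.Injective e := fun i j h => hvind.injective (congrArg Subtype.val h)
  let Φ := (changeOfBasis b).toRingEquiv
  have hΦG (i : ι) : Φ (G i) = X (e i) := by
    rw [← hv i, ← changeOfBasis_linearCombination_X b (e i), Module.Basis.extend_apply_self]
    rfl
  have hΦ (A : Set ι) : (Ideal.span (G '' A)).map Φ = Ideal.span (X '' (e '' A)) := by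
    simp only [Ideal.map_span, Set.image_image, hΦG]
  rw [← Ideal.apply_mem_of_equiv_iff (f := Φ), Ideal.map_pow, ← Set.image_univ (f := G), hΦ,
    Set.image_univ]
  refine mem_span_X_image_sq_of_forall_mem_span_X_image_diff (Set.range_nonempty e) ?_
  rintro _ ⟨i, rfl⟩
  rw [← Set.image_singleton, ← Set.image_compl_eq_range_sdiff_image he, ← hΦ]
  exact Ideal.apply_mem_of_equiv_iff.2 (hf i)

theorem mem_span_image_sq_of_forall_mem_span_image_diff {G : ι → MvPolynomial σ k} {T : Set ι}
    (hG : ∀ i ∈ T, (G i).IsHomogeneous 1) (hind : LinearIndepOn k G T) (hT : T.Nonempty)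
    {f : MvPolynomial σ k} (hf : ∀ i ∈ T, f ∈ Ideal.span (G '' (T \ {i}))) :
    f ∈ Ideal.span (G '' T) ^ 2 := by
  have : Nonempty T := hT.to_subtype
  rw [Set.image_eq_range]
  refine mem_span_range_sq_of_forall_mem_span_image_compl (G := fun i : T => G i)
    (fun i => hG i i.2) hind fun i => ?_
  rw [← Function.comp_def G Subtype.val, Set.image_comp,
    Set.image_compl_eq_range_sdiff_image Subtype.val_injective, Subtype.range_coe,
    Set.image_singleton]
  exact hf i i.2

end LinearForms

end MvPolynomial

theorem star_prev_sub_symbolic_square_general {k : Type*} [Field k] {n s c : ℕ}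
    (L : Fin s → MvPolynomial (Fin (n + 1)) k) (hL : MeetProperly L)
    (hc1 : 2 ≤ c) (hc2 : c ≤ min s n) :
    starIdeal L (c - 1) ≤ starSymbolic L c 2 := by
  intro f hf
  simp only [starIdeal, Ideal.mem_iInf] at hf
  simp only [starSymbolic, Ideal.mem_iInf]
  intro T hT
  refine mem_span_image_sq_of_forall_mem_span_image_diff (fun i _ => hL.1 i)
    (hL.2 T (by omega)) (Finset.card_pos.1 (by omega)) fun i hi => ?_
  rw [← Finset.coe_erase]
  exact hf _ (by rw [Finset.card_erase_of_mem hi, hT])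

theorem star_prev_sub_symbolic_square {k : Type*} [Field k] [Infinite k] {n s c : ℕ}
    (L : Fin s → MvPolynomial (Fin (n + 1)) k) (hL : MeetProperly L)
    (hs : 1 ≤ s) (hc1 : 2 ≤ c) (hc2 : c ≤ min s n) :
    starIdeal L (c - 1) ≤ starSymbolic L c 2 :=
  star_prev_sub_symbolic_square_general L hL hc1 hc2
end
end

section
/- Let V_{c−1} and V_c be the codimension-(c−1) and codimension-c star configurations determined by the same s hyperplanes in P^n meeting properly, where 2 ≤ c ≤ min(s, n). Let F ∈ I_{V_c} be a homogeneous element of degree s−c+1 such that F ∉ (L_{i_1},…,L_{i_{c−1}}) for every choice of c−1 indices 1 ≤ i_1 < ⋯ < i_{c−1} ≤ s (i.e., F does not vanish on any component of V_{c−1}). Then F·I_{V_c} + I_{V_{c−1}} = I_{V_c}^{(2)}. -/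
open MvPolynomial

noncomputable section

/-! Write `P_T` for the ideal generated by the `L i`, `i ∈ T`. It is prime, and `L j ∉ P_T` for
`j ∉ T` as long as `|T| ≤ n`.

For `I_{c-1} ⊆ I^{(2)}`: if `x ∈ P_{T ∖ {t}}` for every `t ∈ T`, write `x = ∑ g_t L_t`; primality
of `P_{T ∖ {t}}` forces `g_t ∈ P_{T ∖ {t}}`, so `x ∈ P_T ^ 2`.

For `I^{(2)} ⊆ F I_c + I_{c-1}`: fix `S` with `|S| = c - 1` and pass to the domain `R ⧸ P_S`, in
which the images of the `L j`, `j ∉ S`, are pairwise non-associated primes. Hence the image of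
`F_S = ∏_{j ∉ S} L j` divides that of `F`, and its square divides that of any `G ∈ I^{(2)}`. Since
`deg F = deg F_S`, in fact `F ≡ u F_S` with `u ∈ kˣ`, so `G ≡ F F_S h_S (mod P_S)` for some `h_S`.
As `F_S ∈ P_{S'}` for `S' ≠ S`, `G - F ∑_S F_S h_S` lies in every `P_{S'}`, while
`∑_S F_S h_S ∈ I_c`. -/

section LinearForms

variable {σ k : Type*} [Field k] {M : Set (MvPolynomial σ k)}

/-- The substitution `X i ↦ f (X i)`, for `f` a linear projection along `span k M`, is a ring
endomorphism with kernel `Ideal.span M`. -/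
theorem exists_algHom_ker_eq_span_of_isHomogeneous_one (hM : ∀ p ∈ M, p.IsHomogeneous 1) :
    ∃ π : MvPolynomial σ k →ₐ[k] MvPolynomial σ k, RingHom.ker π = Ideal.span M ∧
      ∀ p, p.IsHomogeneous 1 → π p = 0 → p ∈ Submodule.span k M := by
  set W := Submodule.span k M
  obtain ⟨g, hg⟩ := W.subtype.exists_leftInverse_of_injective W.ker_subtype
  set f : MvPolynomial σ k →ₗ[k] MvPolynomial σ k := LinearMap.id - W.subtype ∘ₗ g
  have hf_sub (p) : p - f p ∈ W := by simp [f]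
  have hf_zero (w) (hw : w ∈ W) : f w = 0 := by
    have h := LinearMap.congr_fun hg ⟨w, hw⟩
    simp only [LinearMap.comp_apply, Submodule.subtype_apply, LinearMap.id_apply] at h
    simp [f, h]
  set π := aeval (R := k) fun i => f (X i)
  have hπ_eq_f (p) (hp : p.IsHomogeneous 1) : π p = f p := by
    have hp' : p ∈ Submodule.span k (Set.range X) := by
      rw [← homogeneousSubmodule_one_eq_span_X]; exact hp
    refine LinearMap.eqOn_span' (f := π.toLinearMap) (g := f) ?_ hp'
    rintro _ ⟨i, rfl⟩
    simp [π]
  have hsub (p) : p - π p ∈ Ideal.span M := by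
    induction p using MvPolynomial.induction_on with
    | C a => simp
    | add p q hp hq => convert add_mem hp hq using 1; simp only [map_add]; ring
    | mul_X p i hp =>
      have hX : X i - π (X i) ∈ Ideal.span M :=
        Submodule.span_le_restrictScalars k _ M (by simpa [π] using hf_sub (X i))
      convert add_mem (Ideal.mul_mem_right (X i) _ hp) (Ideal.mul_mem_left _ (π p) hX) using 1
      simp only [map_mul]; ring
  refine ⟨π, le_antisymm (fun p hp => by simpa [(RingHom.mem_ker).1 hp] using hsub p)
    (Ideal.span_le.2 fun m hm => ?_), fun p hp h0 => ?_⟩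
  · rw [SetLike.mem_coe, RingHom.mem_ker]
    change π m = 0
    rw [hπ_eq_f m (hM m hm), hf_zero m (Submodule.subset_span hm)]
  · simpa [← hπ_eq_f p hp, h0] using hf_sub p

theorem isPrime_span_of_isHomogeneous_one (hM : ∀ p ∈ M, p.IsHomogeneous 1) :
    (Ideal.span M).IsPrime := by
  obtain ⟨π, hker, -⟩ := exists_algHom_ker_eq_span_of_isHomogeneous_one hM
  rw [← hker]
  exact RingHom.ker_isPrime _

theorem MvPolynomial.IsHomogeneous.mem_span_of_mem_idealSpan {p : MvPolynomial σ k}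
    (hp : p.IsHomogeneous 1) (hM : ∀ q ∈ M, q.IsHomogeneous 1) (h : p ∈ Ideal.span M) :
    p ∈ Submodule.span k M := by
  obtain ⟨π, hker, hπ⟩ := exists_algHom_ker_eq_span_of_isHomogeneous_one hM
  rw [← hker] at h
  exact hπ p hp h

end LinearForms

theorem MvPolynomial.IsHomogeneous.homogeneousComponent_mul {σ R : Type*} [CommSemiring R]
    {a : MvPolynomial σ R} {d : ℕ} (ha : a.IsHomogeneous d) (w : MvPolynomial σ R) :
    homogeneousComponent d (a * w) = a * C (coeff 0 w) := by
  conv_lhs => rw [← sum_homogeneousComponent w, Finset.mul_sum, map_sum]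
  rw [Finset.sum_eq_single 0, ← homogeneousComponent_zero]
  · exact homogeneousComponent_eq_self (ha.mul (homogeneousComponent_isHomogeneous 0 w))
  · intro e _ he
    rw [homogeneousComponent_of_mem (ha.mul (homogeneousComponent_isHomogeneous e w)),
      if_neg (by omega)]
  · simp

section Homogeneous

variable {σ R : Type*} [CommRing R]

attribute [local instance] MvPolynomial.gradedAlgebra

theorem sub_mul_C_coeff_zero_mem_span {M : Set (MvPolynomial σ R)}
    (hM : ∀ p ∈ M, ∃ i, p.IsHomogeneous i) {F a w : MvPolynomial σ R} {d : ℕ}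
    (hF : F.IsHomogeneous d) (ha : a.IsHomogeneous d) (h : F - a * w ∈ Ideal.span M) :
    F - a * C (coeff 0 w) ∈ Ideal.span M := by
  simpa [homogeneousComponent_eq_self hF, ha.homogeneousComponent_mul] using
    homogeneousComponent_mem_of_mem (Ideal.homogeneous_span _ M hM) h d

end Homogeneous

section Quotient

variable {R : Type*} [CommRing R] {I : Ideal R} {a x : R}

theorem Ideal.Quotient.mk_pow_dvd_mk_of_mem {e : ℕ} (h : x ∈ (Ideal.span {a} ⊔ I) ^ e) :
    Ideal.Quotient.mk I a ^ e ∣ Ideal.Quotient.mk I x := by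
  have := Ideal.mem_map_of_mem (Ideal.Quotient.mk I) h
  rwa [Ideal.map_pow, Ideal.map_sup, Ideal.map_span, Set.image_singleton,
    Ideal.map_quotient_self, sup_bot_eq, Ideal.span_singleton_pow,
    Ideal.mem_span_singleton] at this

theorem Ideal.Quotient.mem_sup_of_mk_dvd_mk (h : Ideal.Quotient.mk I a ∣ Ideal.Quotient.mk I x) :
    x ∈ Ideal.span {a} ⊔ I := by
  rwa [← Ideal.mem_span_singleton, ← Set.image_singleton, ← Ideal.map_span, ← Ideal.mem_comap,
    Ideal.comap_map_of_surjective' _ Ideal.Quotient.mk_surjective, Ideal.mk_ker] at h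

theorem Ideal.Quotient.prime_mk_of_isPrime_sup (hP : (Ideal.span {a} ⊔ I).IsPrime)
    (ha : a ∉ I) : Prime (Ideal.Quotient.mk I a) := by
  rw [← Ideal.span_singleton_prime (by rwa [ne_eq, Ideal.Quotient.eq_zero_iff_mem])]
  have : Ideal.span {Ideal.Quotient.mk I a} = (Ideal.span {a} ⊔ I).map (Ideal.Quotient.mk I) := by
    rw [Ideal.map_sup, Ideal.map_span, Set.image_singleton, Ideal.map_quotient_self, sup_bot_eq]
  rw [this]
  exact Ideal.map_isPrime_of_surjective Ideal.Quotient.mk_surjective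
    (by rw [Ideal.mk_ker]; exact le_sup_right)

end Quotient

theorem Finset.prod_pow_dvd_of_prime {M ι : Type*} [CommMonoidWithZero M] [IsCancelMulZero M]
    {t : Finset ι} {p : ι → M} {x : M} (e : ℕ) (hp : ∀ i ∈ t, Prime (p i))
    (hnd : (t : Set ι).Pairwise fun i j => ¬ p i ∣ p j) (hd : ∀ i ∈ t, p i ^ e ∣ x) :
    ∏ i ∈ t, p i ^ e ∣ x := by
  classical
  induction t using Finset.induction_on generalizing x with
  | empty => simp
  | insert a t ha ih =>
    obtain ⟨y, rfl⟩ := hd a (mem_insert_self a t)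
    rw [prod_insert ha]
    refine mul_dvd_mul_left _ (ih (fun i hi => hp i (mem_insert_of_mem hi))
      (hnd.mono (by simp)) fun i hi => ?_)
    have hia : i ≠ a := fun h => ha (h ▸ hi)
    refine (hp i (mem_insert_of_mem hi)).pow_dvd_of_dvd_mul_left e (fun hdvd => ?_)
      (hd i (mem_insert_of_mem hi))
    exact hnd (mem_insert_of_mem hi) (mem_insert_self a t) hia
      ((hp i (mem_insert_of_mem hi)).dvd_of_dvd_pow hdvd)

section SpanImage

variable {ι R : Type*} [CommRing R] [DecidableEq ι] {L : ι → R}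

theorem span_image_insert (j : ι) (S : Finset ι) :
    Ideal.span (L '' ↑(insert j S)) = Ideal.span {L j} ⊔ Ideal.span (L '' ↑S) := by
  rw [Finset.coe_insert, Set.image_insert_eq, Ideal.span_insert]

theorem prod_compl_mem_span_image [Fintype ι] {S T : Finset ι} (h : ¬ T ⊆ S) :
    ∏ j ∈ Sᶜ, L j ∈ Ideal.span (L '' ↑T) := by
  obtain ⟨j, hjT, hjS⟩ := Finset.not_subset.mp h
  rw [← Finset.mul_prod_erase Sᶜ L (Finset.mem_compl.mpr hjS)]
  exact Ideal.mul_mem_right _ _ (Ideal.subset_span ⟨j, hjT, rfl⟩)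

end SpanImage

section StarConfiguration

variable {k : Type*} [Field k] {n s : ℕ} {L : Fin s → MvPolynomial (Fin (n + 1)) k}

open Finset

theorem mem_starIdeal_iff {c : ℕ} {x : MvPolynomial (Fin (n + 1)) k} :
    x ∈ starIdeal L c ↔ ∀ T : Finset (Fin s), T.card = c → x ∈ Ideal.span (L '' ↑T) := by
  simp [starIdeal, Submodule.mem_iInf]

theorem mem_starSymbolic_iff {c ℓ : ℕ} {x : MvPolynomial (Fin (n + 1)) k} :
    x ∈ starSymbolic L c ℓ ↔ ∀ T : Finset (Fin s), T.card = c → x ∈ Ideal.span (L '' ↑T) ^ ℓ := by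
  simp [starSymbolic, Submodule.mem_iInf]

namespace MeetProperly

theorem isPrime_span_image (hL : MeetProperly L) (T : Set (Fin s)) :
    (Ideal.span (L '' T)).IsPrime :=
  isPrime_span_of_isHomogeneous_one (by rintro _ ⟨i, -, rfl⟩; exact hL.1 i)

theorem notMem_span_image (hL : MeetProperly L) {T : Finset (Fin s)} {j : Fin s} (hj : j ∉ T)
    (hT : T.card < n + 1) : L j ∉ Ideal.span (L '' ↑T) := by
  have hindep : LinearIndepOn k L (insert j ↑T) := by
    rw [← Finset.coe_insert]
    refine hL.2 _ (le_min ((Finset.card_le_univ _).trans_eq (Fintype.card_fin s)) ?_)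
    rw [Finset.card_insert_of_notMem hj]
    omega
  exact fun h => hindep.notMem_span_of_insert hj <|
    (hL.1 j).mem_span_of_mem_idealSpan (by rintro _ ⟨i, -, rfl⟩; exact hL.1 i) h

theorem mem_span_image_sq_of_forall_mem_erase (hL : MeetProperly L) {T : Finset (Fin s)}
    (hT : T.card ≤ n + 1) (hne : T.Nonempty) {x : MvPolynomial (Fin (n + 1)) k}
    (hx : ∀ t ∈ T, x ∈ Ideal.span (L '' ↑(T.erase t))) : x ∈ Ideal.span (L '' ↑T) ^ 2 := by
  have span_erase_le (t : Fin s) : Ideal.span (L '' ↑(T.erase t)) ≤ Ideal.span (L '' ↑T) :=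
    Ideal.span_mono (Set.image_mono (coe_subset.2 (T.erase_subset t)))
  obtain ⟨t₀, ht₀⟩ := hne
  obtain ⟨g, rfl⟩ :=
    (Submodule.mem_span_image_finset_iff_exists_fun' _).1 (span_erase_le t₀ (hx t₀ ht₀))
  refine Ideal.sum_mem _ fun t ht => ?_
  have hmul : g t * L t ∈ Ideal.span (L '' ↑(T.erase t)) := by
    have := sub_mem (hx t ht) (Ideal.sum_mem _ fun i hi =>
      Ideal.mul_mem_left _ (g i) (Ideal.subset_span ⟨i, hi, rfl⟩) :
        ∑ i ∈ T.erase t, g i • L i ∈ Ideal.span (L '' ↑(T.erase t)))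
    rwa [← add_sum_erase T _ ht, add_sub_cancel_right, smul_eq_mul] at this
  have hg : g t ∈ Ideal.span (L '' ↑(T.erase t)) :=
    ((hL.isPrime_span_image _).mem_or_mem hmul).resolve_right
      (hL.notMem_span_image (T.notMem_erase t) (by rw [card_erase_of_mem ht]; omega))
  rw [smul_eq_mul, sq]
  exact Ideal.mul_mem_mul (span_erase_le t hg) (Ideal.subset_span ⟨t, ht, rfl⟩)

theorem exists_sub_mul_prod_compl_mem (hL : MeetProperly L) {S : Finset (Fin s)}
    (hS : S.card < n) {F G : MvPolynomial (Fin (n + 1)) k} (hFdeg : F.IsHomogeneous Sᶜ.card)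
    (hFS : F ∉ Ideal.span (L '' ↑S)) (hF : ∀ j ∉ S, F ∈ Ideal.span (L '' ↑(insert j S)))
    (hG : ∀ j ∉ S, G ∈ Ideal.span (L '' ↑(insert j S)) ^ 2) :
    ∃ h, G - F * ((∏ j ∈ Sᶜ, L j) * h) ∈ Ideal.span (L '' ↑S) := by
  set P := Ideal.span (L '' ↑S)
  have : P.IsPrime := hL.isPrime_span_image _
  set π := Ideal.Quotient.mk P
  have hprime : ∀ j ∈ Sᶜ, Prime (π (L j)) := fun j hj => by
    rw [mem_compl] at hj
    refine Ideal.Quotient.prime_mk_of_isPrime_sup ?_ (hL.notMem_span_image hj (by omega))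
    rw [← span_image_insert]
    exact hL.isPrime_span_image _
  have hnd : (↑Sᶜ : Set (Fin s)).Pairwise fun i j => ¬ π (L i) ∣ π (L j) := by
    intro i hi j hj hij hdvd
    rw [coe_compl, Set.mem_compl_iff, mem_coe] at hi hj
    refine hL.notMem_span_image (T := insert i S) (j := j) (by simp [Ne.symm hij, hj])
      (by rw [card_insert_of_notMem hi]; omega) ?_
    rw [span_image_insert]
    exact Ideal.Quotient.mem_sup_of_mk_dvd_mk hdvd
  have hdvd (e : ℕ) (x : MvPolynomial (Fin (n + 1)) k)
      (hx : ∀ j ∉ S, x ∈ Ideal.span (L '' ↑(insert j S)) ^ e) :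
      π (∏ j ∈ Sᶜ, L j) ^ e ∣ π x := by
    rw [map_prod, ← prod_pow]
    exact prod_pow_dvd_of_prime e hprime hnd fun j hj =>
      Ideal.Quotient.mk_pow_dvd_mk_of_mem (span_image_insert (L := L) j S ▸ hx j (mem_compl.1 hj))
  obtain ⟨w, hw⟩ := hdvd 1 F (by simpa using hF)
  obtain ⟨q, hq⟩ := hdvd 2 G hG
  obtain ⟨w, rfl⟩ := Ideal.Quotient.mk_surjective w
  obtain ⟨q, rfl⟩ := Ideal.Quotient.mk_surjective q
  -- comparing degrees, `w` may be replaced by its constant term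
  have hFu : F - (∏ j ∈ Sᶜ, L j) * C (coeff 0 w) ∈ P := by
    refine sub_mul_C_coeff_zero_mem_span ?_ hFdeg ?_
      (Ideal.Quotient.eq.1 (by rw [hw, pow_one, map_mul]))
    · rintro _ ⟨i, -, rfl⟩
      exact ⟨1, hL.1 i⟩
    · simpa using IsHomogeneous.prod Sᶜ L (fun _ => 1) fun j _ => hL.1 j
  have hu : coeff 0 w ≠ 0 := fun hu => hFS (by simpa [hu] using hFu)
  refine ⟨C (coeff 0 w)⁻¹ * q, Ideal.Quotient.eq_zero_iff_mem.1 ?_⟩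
  have hF' := Ideal.Quotient.eq.2 hFu
  have hCu : π (C (coeff 0 w)) * π (C (coeff 0 w)⁻¹) = 1 := by
    rw [← map_mul, ← map_mul, mul_inv_cancel₀ hu, map_one, map_one]
  simp only [map_sub, map_mul] at hq hF' ⊢
  linear_combination hq - (π (∏ j ∈ Sᶜ, L j) * π (C (coeff 0 w)⁻¹) * π q) * hF' -
    π (∏ j ∈ Sᶜ, L j) ^ 2 * π q * hCu

end MeetProperly

theorem starIdeal_le_starSymbolic_succ_two (hL : MeetProperly L) {m : ℕ} (hm : m ≤ n) :
    starIdeal L m ≤ starSymbolic L (m + 1) 2 := fun x hx =>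
  mem_starSymbolic_iff.2 fun T hT =>
    hL.mem_span_image_sq_of_forall_mem_erase (by omega) (card_pos.1 (by omega)) fun t ht =>
      mem_starIdeal_iff.1 hx _ (by rw [card_erase_of_mem ht, hT, Nat.add_sub_cancel])

theorem span_singleton_mul_starIdeal_le_starSymbolic_two {c : ℕ} {F : MvPolynomial (Fin (n + 1)) k}
    (hF : F ∈ starIdeal L c) : Ideal.span {F} * starIdeal L c ≤ starSymbolic L c 2 :=
  fun _ hx => mem_starSymbolic_iff.2 fun T hT => by
    rw [sq]
    refine Ideal.mul_mono ?_ (fun y hy => mem_starIdeal_iff.1 hy T hT) hx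
    exact (Ideal.span_singleton_le_iff_mem _).2 (mem_starIdeal_iff.1 hF T hT)

theorem starSymbolic_succ_two_le_sup (hL : MeetProperly L) {m : ℕ} (hm : m < n)
    {F : MvPolynomial (Fin (n + 1)) k} (hFdeg : F.IsHomogeneous (s - m))
    (hFmem : F ∈ starIdeal L (m + 1))
    (hFnv : ∀ T : Finset (Fin s), T.card = m → F ∉ Ideal.span (L '' ↑T)) :
    starSymbolic L (m + 1) 2 ≤ Ideal.span {F} * starIdeal L (m + 1) ⊔ starIdeal L m := by
  intro G hG
  have hlocal (S : Finset (Fin s)) : ∃ h, S.card = m →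
      G - F * ((∏ j ∈ Sᶜ, L j) * h) ∈ Ideal.span (L '' ↑S) := by
    by_cases hS : S.card = m
    · have hins (j) (hj : j ∉ S) : (insert j S).card = m + 1 := by
        rw [card_insert_of_notMem hj, hS]
      obtain ⟨h, hh⟩ := hL.exists_sub_mul_prod_compl_mem (by omega)
        (by rwa [card_compl, Fintype.card_fin, hS]) (hFnv S hS)
        (fun j hj => mem_starIdeal_iff.1 hFmem _ (hins j hj))
        (fun j hj => mem_starSymbolic_iff.1 hG _ (hins j hj))
      exact ⟨h, fun _ => hh⟩
    · exact ⟨0, fun h => absurd h hS⟩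
  choose h hh using hlocal
  set H := ∑ S ∈ univ.powersetCard m, (∏ j ∈ Sᶜ, L j) * h S with hH
  rw [show G = F * H + (G - F * H) by ring]
  refine Submodule.add_mem_sup (Ideal.mul_mem_mul (Ideal.mem_span_singleton_self F) ?_) ?_
  · refine Ideal.sum_mem _ fun S hS => Ideal.mul_mem_right _ _
      (mem_starIdeal_iff.2 fun T hT => prod_compl_mem_span_image fun hTS => ?_)
    have := card_le_card hTS
    rw [(mem_powersetCard.1 hS).2] at this
    omega
  · refine mem_starIdeal_iff.2 fun S' hS' => ?_
    rw [hH, ← add_sum_erase _ _ (mem_powersetCard.2 ⟨subset_univ _, hS'⟩), mul_add, ← sub_sub]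
    refine sub_mem (hh S' hS') (Ideal.mul_mem_left _ _ (Ideal.sum_mem _ fun S hS =>
      Ideal.mul_mem_right _ _ (prod_compl_mem_span_image fun hsub => ?_)))
    obtain ⟨hSS', hS⟩ := mem_erase.1 hS
    exact hSS' (eq_of_subset_of_card_le hsub (by rw [(mem_powersetCard.1 hS).2, hS'])).symm

end StarConfiguration

theorem star_symbolic_square_eq_basic_double_link_general {k : Type*} [Field k] {n s c : ℕ}
    (L : Fin s → MvPolynomial (Fin (n + 1)) k) (hL : MeetProperly L)
    (hc2 : c ≤ min s n)
    (F : MvPolynomial (Fin (n + 1)) k)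
    (hFdeg : F.IsHomogeneous (s - c + 1))
    (hFmem : F ∈ starIdeal L c)
    (hFnv : ∀ T : Finset (Fin s), T.card = c - 1 → F ∉ Ideal.span (L '' ↑T)) :
    Ideal.span {F} * starIdeal L c + starIdeal L (c - 1) = starSymbolic L c 2 := by
  obtain ⟨m, rfl⟩ : ∃ m, c = m + 1 := Nat.exists_eq_add_one.2 <| Nat.pos_of_ne_zero fun hc => by
    subst hc
    exact hFnv ∅ rfl (mem_starIdeal_iff.1 hFmem ∅ rfl)
  have hms : m + 1 ≤ s := hc2.trans (min_le_left _ _)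
  have hmn : m + 1 ≤ n := hc2.trans (min_le_right _ _)
  rw [show s - (m + 1) + 1 = s - m by omega] at hFdeg
  simp only [Nat.add_sub_cancel] at hFnv ⊢
  rw [Submodule.add_eq_sup]
  exact le_antisymm
    (sup_le (span_singleton_mul_starIdeal_le_starSymbolic_two hFmem)
      (starIdeal_le_starSymbolic_succ_two hL (by omega)))
    (starSymbolic_succ_two_le_sup hL hmn hFdeg hFmem hFnv)

/-- Basic double linkage description of the symbolic square of a star configuration ideal. -/
theorem star_symbolic_square_eq_basic_double_link {k : Type*} [Field k] [Infinite k] {n s c : ℕ}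
    (L : Fin s → MvPolynomial (Fin (n + 1)) k) (hL : MeetProperly L)
    (hs : 1 ≤ s) (hc1 : 2 ≤ c) (hc2 : c ≤ min s n)
    (F : MvPolynomial (Fin (n + 1)) k)
    (hFdeg : F.IsHomogeneous (s - c + 1))
    (hFmem : F ∈ starIdeal L c)
    (hFnv : ∀ T : Finset (Fin s), T.card = c - 1 → F ∉ Ideal.span (L '' ↑T)) :
    Ideal.span {F} * starIdeal L c + starIdeal L (c - 1) = starSymbolic L c 2 :=
  star_symbolic_square_eq_basic_double_link_general L hL hc2 F hFdeg hFmem hFnv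
end
end
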